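/- arXiv:1101.5211 — 3 statements merged into one kernel-verified Lean document; each statement's English description precedes it below -/
import Mathlib

section
/- The modular closure cl(S) of a set S ⊆ V(G) is well-defined: the iterative procedure that starts with S⁰ = S and at each step adds, for every pair x,y ∈ Sⁱ of the same colour, the symmetric difference set (d(x) ∩ e(y)) ∪ (e(x) ∩ d(y)), terminates in a fixed point which is the unique smallest CWS subset of G containing S. -/
/-- A subset `S` is connected cell-wise symmetrically (CWS) relative to a vertex colouring
`θ` if any two vertices of `S` with the same colour have identical neighbour sets
outside `S`. -/
def IsCWS {V C : Type*} (G : SimpleGraph V) (θ : V → C) (S : Set V) : Prop :=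
  ∀ u ∈ S, ∀ v ∈ S, θ u = θ v → ∀ w ∉ S, (G.Adj u w ↔ G.Adj v w)

/-- One step of the closure procedure: to `S` add, for every pair `x, y ∈ S` of the same
colour, the set `(d(x) ∩ e(y)) ∪ (e(x) ∩ d(y))` of vertices adjacent to exactly one of
`x` and `y`. -/
def wlStep {V C : Type*} (G : SimpleGraph V) (θ : V → C) (S : Set V) : Set V :=
  S ∪ {w | ∃ x ∈ S, ∃ y ∈ S, θ x = θ y ∧
    ((G.Adj x w ∧ ¬ G.Adj y w) ∨ (¬ G.Adj x w ∧ G.Adj y w))}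

lemma subset_wlStep {V C : Type*} (G : SimpleGraph V) (θ : V → C) (S : Set V) :
    S ⊆ wlStep G θ S := Set.subset_union_left

lemma wlStep_mono {V C : Type*} (G : SimpleGraph V) (θ : V → C) {S T : Set V}
    (h : S ⊆ T) : wlStep G θ S ⊆ wlStep G θ T := by
  rintro w (hw | ⟨x, hx, y, hy, hθ, hxy⟩)
  · exact Or.inl (h hw)
  · exact Or.inr ⟨x, h hx, y, h hy, hθ, hxy⟩

lemma isCWS_of_fixed {V C : Type*} (G : SimpleGraph V) (θ : V → C) {S : Set V}
    (h : wlStep G θ S = S) : IsCWS G θ S := by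
  intro u hu v hv hθ w hw
  by_contra hiff
  apply hw
  rw [← h]
  exact Or.inr ⟨u, hu, v, hv, hθ, by tauto⟩

lemma wlStep_fixed_of_isCWS {V C : Type*} (G : SimpleGraph V) (θ : V → C) {S : Set V}
    (h : IsCWS G θ S) : wlStep G θ S = S := by
  apply Set.Subset.antisymm _ (subset_wlStep G θ S)
  rintro w (hw | ⟨x, hx, y, hy, hθ, hxy⟩)
  · exact hw
  · by_contra hw
    have := h x hx y hy hθ w hw
    tauto

/-- The modular closure `cl S` is well-defined: on a finite graph the iterative procedure
starting from `S⁰ = S` and repeatedly applying `wlStep` terminates in a fixed point,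
which is the unique smallest CWS subset of `G` containing `S`. -/
theorem wlClosure_well_defined {V C : Type*} [Fintype V] (G : SimpleGraph V) (θ : V → C)
    (S : Set V) :
    ∃ n : ℕ, wlStep G θ ((wlStep G θ)^[n] S) = (wlStep G θ)^[n] S ∧
      IsCWS G θ ((wlStep G θ)^[n] S) ∧ S ⊆ (wlStep G θ)^[n] S ∧
      ∀ T : Set V, IsCWS G θ T → S ⊆ T → (wlStep G θ)^[n] S ⊆ T := by
  classical
  -- termination
  have hsub : ∀ n, (wlStep G θ)^[n] S ⊆ (wlStep G θ)^[n + 1] S := by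
    intro n
    rw [Function.iterate_succ_apply']
    exact subset_wlStep G θ _
  have hex : ∃ n, wlStep G θ ((wlStep G θ)^[n] S) = (wlStep G θ)^[n] S := by
    by_contra hne
    push_neg at hne
    have hlt : ∀ n, (wlStep G θ)^[n] S ⊂ (wlStep G θ)^[n + 1] S := by
      intro n
      refine (Set.ssubset_iff_of_subset (hsub n)).2 ?_
      have := hne n
      rw [Function.iterate_succ_apply']
      by_contra hc
      push_neg at hc
      exact this (Set.Subset.antisymm hc (subset_wlStep G θ _))
    have hcard : ∀ n, n ≤ ((wlStep G θ)^[n] S).ncard := by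
      intro n
      induction n with
      | zero => exact Nat.zero_le _
      | succ n ih =>
        have := Set.ncard_lt_ncard (hlt n) (Set.toFinite _)
        omega
    have h1 := hcard (Fintype.card V + 1)
    have h2 : ((wlStep G θ)^[Fintype.card V + 1] S).ncard ≤ (Set.univ : Set V).ncard :=
      Set.ncard_le_ncard (Set.subset_univ _) Set.finite_univ
    rw [Set.ncard_univ, Nat.card_eq_fintype_card] at h2
    omega
  obtain ⟨n, hn⟩ := hex
  refine ⟨n, hn, isCWS_of_fixed G θ hn, ?_, ?_⟩
  · intro x hx
    clear hn
    induction n with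
    | zero => exact hx
    | succ n ih => exact (hsub n) ih
  · intro T hT hST
    clear hn
    induction n with
    | zero => exact hST
    | succ n ih =>
      rw [Function.iterate_succ_apply']
      calc wlStep G θ ((wlStep G θ)^[n] S) ⊆ wlStep G θ T := wlStep_mono G θ ih
        _ = T := wlStep_fixed_of_isCWS G θ hT
end

section
/- If a colour class c_2 has some vertex contained in cl([c_1]) for a colour class c_1 of an equitable colouring of G, then the entire class [c_2] is contained in cl([c_1]). -/
/-- The CWS modular closure of `S`: the union of the iterates of `wlStep`. -/
def wlClosure {V C : Type*} (G : SimpleGraph V) (θ : V → C) (S : Set V) : Set V :=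
  ⋃ n : ℕ, (wlStep G θ)^[n] S

/-- The colouring `θ` is equitable: any two same-coloured vertices have the same number
of neighbours in each colour class. -/
def IsEquitable {V C : Type*} (G : SimpleGraph V) (θ : V → C) : Prop :=
  ∀ u v : V, θ u = θ v → ∀ c : C,
    (G.neighborSet u ∩ θ ⁻¹' {c}).ncard = (G.neighborSet v ∩ θ ⁻¹' {c}).ncard

section Aux

variable {V C : Type*} (G : SimpleGraph V) (θ : V → C)

lemma wlStep_subset (S : Set V) : S ⊆ wlStep G θ S := Set.subset_union_left

lemma wlIter_mono (A : Set V) : Monotone (fun n => (wlStep G θ)^[n] A) := by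
  apply monotone_nat_of_le_succ
  intro n
  rw [Function.iterate_succ_apply']
  exact wlStep_subset G θ _

lemma wlIter_subset_closure (A : Set V) (n : ℕ) :
    (wlStep G θ)^[n] A ⊆ wlClosure G θ A :=
  Set.subset_iUnion (fun n => (wlStep G θ)^[n] A) n

lemma wlClosure_closed {A : Set V} {x y w : V} (hx : x ∈ wlClosure G θ A)
    (hy : y ∈ wlClosure G θ A) (hxy : θ x = θ y)
    (hw : (G.Adj x w ∧ ¬ G.Adj y w) ∨ (¬ G.Adj x w ∧ G.Adj y w)) :
    w ∈ wlClosure G θ A := by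
  simp only [wlClosure, Set.mem_iUnion] at hx hy ⊢
  obtain ⟨n, hx⟩ := hx
  obtain ⟨m, hy⟩ := hy
  refine ⟨max n m + 1, ?_⟩
  rw [Function.iterate_succ_apply']
  exact Set.mem_union_right _
    ⟨x, wlIter_mono G θ A (le_max_left n m) hx,
     y, wlIter_mono G θ A (le_max_right n m) hy, hxy, hw⟩

/-- The key counting argument: if the full colour class of `x` is contained in the
closure, `v` is adjacent to `x` but not to the same-coloured `y`, and `u` has the same
colour as `v`, then `u` must lie in the closure. -/
lemma no_split [Fintype V] (hEq : IsEquitable G θ) {A : Set V} {x y v u : V}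
    (hxy : θ x = θ y)
    (hfull : θ ⁻¹' {θ x} ⊆ wlClosure G θ A)
    (hxv : G.Adj x v) (hyv : ¬ G.Adj y v)
    (hvu : θ u = θ v)
    (hu : u ∉ wlClosure G θ A) : False := by
  have hxcl : x ∈ wlClosure G θ A := hfull rfl
  have hcard := hEq u v hvu (θ x)
  by_cases h1 : G.Adj x u
  · -- every vertex of the class of x is adjacent to u
    have hall : ∀ p, θ p = θ x → G.Adj p u := by
      intro p hp
      by_contra hpu
      exact hu (wlClosure_closed G θ hxcl (hfull hp) hp.symm (Or.inl ⟨h1, hpu⟩))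
    have hNu : G.neighborSet u ∩ θ ⁻¹' {θ x} = θ ⁻¹' {θ x} := by
      ext w
      simp only [Set.mem_inter_iff, SimpleGraph.mem_neighborSet, Set.mem_preimage,
        Set.mem_singleton_iff, and_iff_right_iff_imp]
      intro hw
      exact (hall w hw).symm
    rw [hNu] at hcard
    have hsub : G.neighborSet v ∩ θ ⁻¹' {θ x} ⊆ θ ⁻¹' {θ x} := Set.inter_subset_right
    have heq : G.neighborSet v ∩ θ ⁻¹' {θ x} = θ ⁻¹' {θ x} :=
      Set.eq_of_subset_of_ncard_le hsub (le_of_eq hcard)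
    have hy : y ∈ G.neighborSet v ∩ θ ⁻¹' {θ x} := by
      rw [heq]; exact hxy.symm
    exact hyv hy.1.symm
  · -- no vertex of the class of x is adjacent to u
    have hall : ∀ p, θ p = θ x → ¬ G.Adj p u := by
      intro p hp hpu
      exact hu (wlClosure_closed G θ (hfull hp) hxcl hp (Or.inl ⟨hpu, h1⟩))
    have hNu : G.neighborSet u ∩ θ ⁻¹' {θ x} = ∅ := by
      ext w
      simp only [Set.mem_inter_iff, SimpleGraph.mem_neighborSet, Set.mem_preimage,
        Set.mem_singleton_iff, Set.mem_empty_iff_false, iff_false, not_and]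
      intro hw hw'
      exact hall w hw' hw.symm
    rw [hNu, Set.ncard_empty] at hcard
    have hxmem : x ∈ G.neighborSet v ∩ θ ⁻¹' {θ x} := ⟨hxv.symm, rfl⟩
    have : G.neighborSet v ∩ θ ⁻¹' {θ x} = ∅ :=
      (Set.ncard_eq_zero (Set.toFinite _)).mp hcard.symm
    rw [this] at hxmem
    exact hxmem

lemma class_in_closure_aux [Fintype V] (hEq : IsEquitable G θ) (c₁ : C) :
    ∀ n : ℕ, ∀ v ∈ (wlStep G θ)^[n] (θ ⁻¹' {c₁}),
      θ ⁻¹' {θ v} ⊆ wlClosure G θ (θ ⁻¹' {c₁}) := by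
  intro n
  induction n with
  | zero =>
    intro v hv u hu
    have hv' : θ v = c₁ := hv
    have hu' : θ u = θ v := hu
    exact wlIter_subset_closure G θ _ 0 (show θ u = c₁ from hu'.trans hv')
  | succ n ih =>
    intro v hv u hu
    rw [Function.iterate_succ_apply'] at hv
    rcases hv with hv | ⟨x, hx, y, hy, hxy, hadj⟩
    · exact ih v hv hu
    · have hu' : θ u = θ v := hu
      by_contra hucl
      rcases hadj with ⟨hxv, hyv⟩ | ⟨hxv, hyv⟩
      · exact no_split G θ hEq hxy (ih x hx) hxv hyv hu' hucl
      · have hfull : θ ⁻¹' {θ y} ⊆ wlClosure G θ (θ ⁻¹' {c₁}) := ih y hy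
        exact no_split G θ hEq hxy.symm hfull hyv hxv hu' hucl

end Aux

/-- If some vertex of the colour class `c₂` is contained in the closure of the class
`[c₁]` (for an equitable colouring of a finite graph `G`), then the entire class `[c₂]`
is contained in `cl [c₁]`. -/
theorem class_in_closure {V C : Type*} [Fintype V] (G : SimpleGraph V) (θ : V → C)
    (hEq : IsEquitable G θ) (c₁ c₂ : C)
    (h : ∃ v : V, θ v = c₂ ∧ v ∈ wlClosure G θ (θ ⁻¹' {c₁})) :
    θ ⁻¹' {c₂} ⊆ wlClosure G θ (θ ⁻¹' {c₁}) := by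
  obtain ⟨v, hvc, hvcl⟩ := h
  simp only [wlClosure, Set.mem_iUnion] at hvcl
  obtain ⟨n, hn⟩ := hvcl
  intro u hu
  have hu' : θ u = c₂ := hu
  exact class_in_closure_aux G θ hEq c₁ n v hn (show θ u = θ v from hu'.trans hvc.symm)
end

section
/- Canonical contraction preserves isomorphism: if G and H are coloured graphs with CWS subgraphs S₁ ⊆ G and S₂ ⊆ H respectively, and G', H' are the graphs obtained by canonically contracting S₁ and S₂ (replacing each by a single vertex coloured by the isomorphism class of the subgraph, with edges to w ∈ G\S coloured by the multiset of colour classes of S that w attaches to), then G' ≅ H' (as coloured graphs) if and only if G ≅ H via an isomorphism mapping S₁ onto S₂. -/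
/-- Vertex type obtained by contracting `S` to a single new vertex (`none`). -/
def ContractVert {V : Type*} (S : Set V) : Type _ := Option {v : V // v ∉ S}

/-- Adjacency after contracting `S`: old edges outside `S` survive, and the contracted
vertex is adjacent to `w` whenever some vertex of `S` is adjacent to `w`. -/
def contractAdj {V : Type*} (G : SimpleGraph V) (S : Set V) :
    ContractVert S → ContractVert S → Prop
  | some u, some v => G.Adj u.1 v.1
  | some u, none => ∃ x ∈ S, G.Adj x u.1
  | none, some v => ∃ x ∈ S, G.Adj x v.1
  | none, none => False

/-- The canonical contraction of `G` along a subgraph `S`. -/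
def contractGraph {V : Type*} (G : SimpleGraph V) (S : Set V) :
    SimpleGraph (ContractVert S) where
  Adj := contractAdj G S
  symm := ⟨by
    rintro (u | u) (v | v) h
    · exact h
    · exact h
    · exact h
    · exact G.adj_symm h⟩
  loopless := ⟨by
    rintro (u | u) h
    · exact h
    · exact G.irrefl h⟩

/-- Colouring of the contracted graph: a surviving vertex keeps its colour together with
the set of colour classes of `S` it attaches to (encoding the colours of contracted
edges); the contracted vertex receives the unique new colour `inr ()`, with the
isomorphism class of the contracted subgraph recorded separately. -/
def contractColour {V C : Type*} (G : SimpleGraph V) (θ : V → C) (S : Set V) :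
    ContractVert S → (C × Set C) ⊕ Unit
  | some u => Sum.inl (θ u.1, {c | ∃ x ∈ S, θ x = c ∧ G.Adj x u.1})
  | none => Sum.inr ()

section

variable {V W C : Type*} {G : SimpleGraph V} {H : SimpleGraph W}

def attachedColours (G : SimpleGraph V) (θ : V → C) (S : Set V) (w : V) : Set C :=
  {c | ∃ x ∈ S, θ x = c ∧ G.Adj x w}

lemma contractColour_some (θ : V → C) (S : Set V) (u : {v // v ∉ S}) :
    contractColour G θ S (some u) = Sum.inl (θ u, attachedColours G θ S u) :=
  rfl

lemma contractColour_eq_inr_iff (θ : V → C) {S : Set V} {x : ContractVert S} :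
    contractColour G θ S x = Sum.inr () ↔ x = none := by
  rcases x with _ | u
  · exact iff_of_true rfl rfl
  · simp [contractColour]

lemma IsCWS.adj_iff_mem_attachedColours {θ : V → C} {S : Set V} (h : IsCWS G θ S)
    {v w : V} (hv : v ∈ S) (hw : w ∉ S) : G.Adj v w ↔ θ v ∈ attachedColours G θ S w :=
  ⟨fun hadj => ⟨v, hv, rfl, hadj⟩, fun ⟨x, hx, hxv, hadj⟩ => (h x hx v hv hxv w hw).1 hadj⟩

namespace SimpleGraph.Iso

lemma mem_iff_of_image_eq (Φ : G ≃g H) {S : Set V} {T : Set W} (h : Φ '' S = T) (v : V) :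
    Φ v ∈ T ↔ v ∈ S := by
  rw [← h, Φ.injective.mem_set_image]

lemma attachedColours_map (Φ : G ≃g H) {θG : V → C} {θH : W → C}
    (hθ : ∀ v, θH (Φ v) = θG v) (S : Set V) (w : V) :
    attachedColours H θH (Φ '' S) (Φ w) = attachedColours G θG S w := by
  ext c
  simp [attachedColours, hθ, Φ.map_adj_iff]

lemma exists_mem_image_adj_iff (Φ : G ≃g H) (S : Set V) (w : V) :
    (∃ y ∈ Φ '' S, H.Adj y (Φ w)) ↔ ∃ x ∈ S, G.Adj x w := by
  simp [Φ.map_adj_iff]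

def contract (Φ : G ≃g H) {S : Set V} {T : Set W} (h : Φ '' S = T) :
    contractGraph G S ≃g contractGraph H T where
  toEquiv := Equiv.optionCongr
    (Φ.toEquiv.subtypeEquiv fun v => (not_congr (Φ.mem_iff_of_image_eq h v)).symm)
  map_rel_iff' := by
    subst h
    rintro (u | u) (v | v)
    · exact Iff.rfl
    · exact Φ.exists_mem_image_adj_iff S v
    · exact Φ.exists_mem_image_adj_iff S u
    · exact Φ.map_adj_iff

lemma contractColour_contract (Φ : G ≃g H) {θG : V → C} {θH : W → C}
    (hθ : ∀ v, θH (Φ v) = θG v) {S : Set V} {T : Set W} (h : Φ '' S = T)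
    (x : ContractVert S) : contractColour H θH T (Φ.contract h x) = contractColour G θG S x := by
  subst h
  rcases x with _ | u
  · rfl
  · exact congrArg Sum.inl (Prod.ext (hθ u) (Φ.attachedColours_map hθ S u))

section glue

open scoped Classical

variable {S₁ : Set V} {S₂ : Set W} (ψ : G.induce S₁ ≃g H.induce S₂)
  (e : {v // v ∉ S₁} ≃ {w // w ∉ S₂}) (outer : ∀ u u', H.Adj (e u) (e u') ↔ G.Adj u u')
  (cross : ∀ v u, H.Adj (ψ v) (e u) ↔ G.Adj v u)

noncomputable def glue : G ≃g H where
  toEquiv := (Equiv.sumCompl (· ∈ S₁)).symm.trans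
    ((ψ.toEquiv.sumCongr e).trans (Equiv.sumCompl (· ∈ S₂)))
  map_rel_iff' := by
    intro a b
    by_cases ha : a ∈ S₁ <;> by_cases hb : b ∈ S₁ <;>
      simp only [Equiv.trans_apply, Equiv.sumCompl_symm_apply_of_pos, ha, hb,
        Equiv.sumCompl_symm_apply_of_neg, not_false_eq_true, Equiv.sumCongr_apply, Sum.map_inl,
        Sum.map_inr, Equiv.sumCompl_apply_inl, Equiv.sumCompl_apply_inr]
    · exact ψ.map_adj_iff (v := ⟨a, ha⟩) (w := ⟨b, hb⟩)
    · exact cross ⟨a, ha⟩ ⟨b, hb⟩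
    · rw [H.adj_comm, G.adj_comm]
      exact cross ⟨b, hb⟩ ⟨a, ha⟩
    · exact outer ⟨a, ha⟩ ⟨b, hb⟩

lemma glue_apply_of_mem {v : V} (hv : v ∈ S₁) : glue ψ e outer cross v = ψ ⟨v, hv⟩ := by
  simp [glue, Equiv.sumCompl_symm_apply_of_pos hv]

lemma glue_apply_of_notMem {v : V} (hv : v ∉ S₁) : glue ψ e outer cross v = e ⟨v, hv⟩ := by
  simp [glue, Equiv.sumCompl_symm_apply_of_neg hv]

lemma image_glue : glue ψ e outer cross '' S₁ = S₂ := by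
  refine ((Set.preimage_eq_iff_eq_image (glue ψ e outer cross).bijective).1 ?_).symm
  ext v
  by_cases hv : v ∈ S₁
  · simp [glue_apply_of_mem ψ e outer cross hv, hv]
  · simpa [glue_apply_of_notMem ψ e outer cross hv, hv] using (e ⟨v, hv⟩).2

end glue

end SimpleGraph.Iso

section contractionIso

variable {θG : V → C} {θH : W → C} {S₁ : Set V} {S₂ : Set W}
  (φ : contractGraph G S₁ ≃g contractGraph H S₂)

lemma map_none_of_contractColour
    (hφ : ∀ x, contractColour H θH S₂ (φ x) = contractColour G θG S₁ x) : φ none = none :=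
  (contractColour_eq_inr_iff θH).1 (hφ none)

lemma exists_equiv_compl_of_map_none (h : φ none = none) :
    ∃ e : {v // v ∉ S₁} ≃ {w // w ∉ S₂}, ∀ u, φ (some u) = some (e u) := by
  refine ⟨Equiv.removeNone φ.toEquiv, fun u => (Equiv.removeNone_some _ ?_).symm⟩
  refine Option.ne_none_iff_exists'.1 fun hu => ?_
  exact Option.some_ne_none u (φ.injective (hu.trans h.symm))

theorem exists_iso_of_contractGraph_iso (h₁ : IsCWS G θG S₁) (h₂ : IsCWS H θH S₂)
    (hφ : ∀ x, contractColour H θH S₂ (φ x) = contractColour G θG S₁ x)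
    (ψ : G.induce S₁ ≃g H.induce S₂) (hψ : ∀ x : S₁, θH (ψ x).1 = θG x.1) :
    ∃ Φ : G ≃g H, (∀ v, θH (Φ v) = θG v) ∧ Φ '' S₁ = S₂ := by
  obtain ⟨e, he⟩ := exists_equiv_compl_of_map_none φ (map_none_of_contractColour φ hφ)
  have hcol (u) : θH (e u) = θG u ∧
      attachedColours H θH S₂ (e u) = attachedColours G θG S₁ u := by
    have := hφ (some u)
    rw [he, contractColour_some, contractColour_some] at this
    exact Prod.ext_iff.1 (Sum.inl_injective this)
  have outer (u u') : H.Adj (e u) (e u') ↔ G.Adj u u' := by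
    have h := φ.map_adj_iff (v := some u) (w := some u')
    rwa [he, he] at h
  have cross (v u) : H.Adj (ψ v) (e u) ↔ G.Adj v u := by
    rw [h₂.adj_iff_mem_attachedColours (ψ v).2 (e u).2, h₁.adj_iff_mem_attachedColours v.2 u.2,
      hψ, (hcol u).2]
  refine ⟨ψ.glue e outer cross, fun v => ?_, ψ.image_glue e outer cross⟩
  by_cases hv : v ∈ S₁
  · rw [ψ.glue_apply_of_mem e outer cross hv, hψ]
  · rw [ψ.glue_apply_of_notMem e outer cross hv, (hcol _).1]

end contractionIso

end

/-- Canonical contraction preserves isomorphism: for coloured graphs `(G, θG)`, `(H, θH)`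
with CWS subgraphs `S₁ ⊆ G`, `S₂ ⊆ H`, the contracted coloured graphs are isomorphic
(colour-preservingly, with the contracted vertex coloured by the isomorphism class of the
contracted subgraph, i.e. together with a colour-preserving isomorphism of the induced
subgraphs on `S₁` and `S₂`) if and only if `G ≅ H` via a colour-preserving isomorphism
mapping `S₁` onto `S₂`. -/
theorem canonical_contraction_preserves_isomorphism {V W C : Type*}
    (G : SimpleGraph V) (H : SimpleGraph W) (θG : V → C) (θH : W → C)
    (S₁ : Set V) (S₂ : Set W) (h₁ : IsCWS G θG S₁) (h₂ : IsCWS H θH S₂) :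
    ((∃ φ : contractGraph G S₁ ≃g contractGraph H S₂,
        ∀ x, contractColour H θH S₂ (φ x) = contractColour G θG S₁ x) ∧
      (∃ ψ : G.induce S₁ ≃g H.induce S₂, ∀ x : S₁, θH (ψ x).1 = θG x.1))
    ↔ (∃ Φ : G ≃g H, (∀ v : V, θH (Φ v) = θG v) ∧ Φ '' S₁ = S₂) := by
  constructor
  · rintro ⟨⟨φ, hφ⟩, ⟨ψ, hψ⟩⟩
    exact exists_iso_of_contractGraph_iso φ h₁ h₂ hφ ψ hψ
  · rintro ⟨Φ, hθ, hS⟩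
    refine ⟨⟨Φ.contract hS, Φ.contractColour_contract hθ hS⟩, ?_⟩
    exact ⟨Φ.induce (hS ▸ Φ.injective.injOn.bijOn_image), fun x => hθ x⟩
end
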